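/- arXiv:2602.11892 — 2 statements merged into one kernel-verified Lean document; each statement's English description precedes it below -/
import Mathlib

section
/- Every connected cubic graph other than K_4 and K_{3,3} is 3-connected or has a 2-vertex separator; and every connected cubic graph that is a circuit of some matroidal 2-rigidity family (hence 2-connected) and is neither K_4 nor K_{3,3} must be 3-connected. -/
/-- The vertex set of a graph given as a set of (undirected) edges. -/
def vertsOf {α : Type*} (G : Set (Sym2 α)) : Set α := {v | ∃ e ∈ G, v ∈ e}

/-- The degree of a vertex in a graph given as a set of edges. -/
noncomputable def edeg {α : Type*} (G : Set (Sym2 α)) (v : α) : ℕ := {e ∈ G | v ∈ e}.ncard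

/-- Laman's sparsity condition: every set of at least two vertices spans at
most `2m - 3` edges. This characterizes independence in the generic plane
rigidity matroid. -/
def Laman {n : ℕ} (G : Set (Sym2 (Fin n))) : Prop :=
  ∀ U : Finset (Fin n), 2 ≤ U.card →
    {e ∈ G | ∀ v ∈ e, v ∈ U}.ncard ≤ 2 * U.card - 3

/-- A circuit of a matroid: a dependent set all of whose proper subsets are
independent. -/
def IsCircuitIn {β : Type*} (M : Matroid β) (C : Set β) : Prop :=
  M.Dep C ∧ ∀ D : Set β, D ⊂ C → M.Indep D

/-- The matroid `M` has rank `k` (every base has `k` elements). -/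
def RankEq {β : Type*} (M : Matroid β) (k : ℕ) : Prop :=
  ∀ B : Set β, M.IsBase B → B.ncard = k

/-- The edge set of a copy of `K₄` given by an injection `f : Fin 4 ↪ Fin n`. -/
def K4Copy {n : ℕ} (f : Fin 4 ↪ Fin n) : Set (Sym2 (Fin n)) :=
  {e | ∃ u v : Fin 4, u ≠ v ∧ e = s(f u, f v)}

/-- An abstract 2-rigidity matroid on the edge set of `K_n`: its ground set
consists of all non-loop edges, it has rank `2n - 3`, and every copy of `K₄`
is a circuit. -/
def Rigidity2Matroid {n : ℕ} (M : Matroid (Sym2 (Fin n))) : Prop :=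
  M.E = {e : Sym2 (Fin n) | ¬ e.IsDiag} ∧ RankEq M (2 * n - 3) ∧
    ∀ f : Fin 4 ↪ Fin n, IsCircuitIn M (K4Copy f)

/-- A matroidal 2-rigidity family: a sequence of graph matroids of rank
`2n - 3`, symmetric and hereditary in the sense that independence is
preserved under any injection of the vertex set. -/
structure RigFamily where
  M : (n : ℕ) → Matroid (Sym2 (Fin n))
  ground : ∀ n : ℕ, (M n).E = {e : Sym2 (Fin n) | ¬ e.IsDiag}
  rank : ∀ n : ℕ, 2 ≤ n → RankEq (M n) (2 * n - 3)
  hered : ∀ {n m : ℕ} (f : Fin n ↪ Fin m) (G : Set (Sym2 (Fin n))),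
    (M n).Indep G ↔ (M m).Indep (Sym2.map (⇑f) '' G)

/-- The 0-extension property: attaching a new vertex by at most two edges to
an independent graph keeps it independent. -/
def ZeroExt (F : RigFamily) : Prop :=
  ∀ (n : ℕ) (G : Set (Sym2 (Fin n))) (v a b : Fin n),
    v ∉ vertsOf G → v ≠ a → v ≠ b →
    (F.M n).Indep G → (F.M n).Indep (G ∪ {s(v, a), s(v, b)})

/-- Adjacency in a graph given as a set of edges. -/
def EAdj {α : Type*} (G : Set (Sym2 α)) (a b : α) : Prop := a ≠ b ∧ s(a, b) ∈ G

/-- Connectivity of a graph given as a set of edges: any two of its vertices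
are joined by a walk. -/
def EConnected {α : Type*} (G : Set (Sym2 α)) : Prop :=
  ∀ u ∈ vertsOf G, ∀ w ∈ vertsOf G, Relation.ReflTransGen (EAdj G) u w

/-!
The first claim is elementary: a set of at most two vertices that disconnects `G` can be
enlarged to exactly two vertices while avoiding two vertices in different components.

For the second, let a set `s` of at most two vertices disconnect the cubic circuit `H`. The edges meeting
one component of `H - s` and the remaining edges split `H` as `X ∪ Y`, with `X` and `Y`
independent and sharing at most two vertices. By heredity, the complete graph on `m` vertices has
rank `2m - 3`, and 0-extensions build, inside the union of the complete graphs on `V(X)` and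
`V(Y)`, an independent set whose size is the sum of their ranks (one shared vertex) or one less
(two shared vertices `u, w`). Counting then shows that `X ∪ Y` is independent in the first case,
and that `Y + uw` is dependent in the second (the 2-separation lemma). But in the second case
degree counting gives `u` degree one on one side, say `Y`, so `Y + uw` has maximum degree three
and is connected with a vertex of degree two: it is obtained by 0-extensions, hence independent.
-/

open Set

lemma compl_nonempty_of_ncard_lt_card {V : Type*} [Fintype V] {s : Set V}
    (hs : s.ncard < Fintype.card V) : sᶜ.Nonempty :=
  nonempty_compl.2 fun h => by
    rw [h, ncard_univ, Nat.card_eq_fintype_card] at hs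
    omega

section EdgeSets

variable {α : Type*}

lemma mem_vertsOf_of_mem {G : Set (Sym2 α)} {e : Sym2 α} {v : α} (he : e ∈ G) (hv : v ∈ e) :
    v ∈ vertsOf G :=
  ⟨e, he, hv⟩

lemma vertsOf_mono {G G' : Set (Sym2 α)} (h : G ⊆ G') : vertsOf G ⊆ vertsOf G' :=
  fun _ ⟨e, he, hve⟩ => ⟨e, h he, hve⟩

lemma vertsOf_union (G G' : Set (Sym2 α)) : vertsOf (G ∪ G') = vertsOf G ∪ vertsOf G' := by
  ext v
  simp [vertsOf, or_and_right, exists_or]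

lemma vertsOf_singleton_mk (a b : α) : vertsOf {s(a, b)} = {a, b} := by
  ext v
  simp [vertsOf]

lemma insert_insert_sdiff_pair {W : Set α} {u w : α} (hu : u ∈ W) (hw : w ∈ W) :
    insert u (insert w (W \ {u, w})) = W := by
  ext x
  by_cases hxu : x = u <;> by_cases hxw : x = w <;> simp_all

lemma two_le_ncard_of_mem [Finite α] {W : Set α} {u w : α} (hu : u ∈ W) (hw : w ∈ W)
    (huw : u ≠ w) : 2 ≤ W.ncard :=
  ncard_pair huw ▸ ncard_le_ncard (pair_subset hu hw)

lemma ncard_sdiff_pair_add_two [Finite α] {W : Set α} {u w : α} (hu : u ∈ W) (hw : w ∈ W)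
    (huw : u ≠ w) : (W \ {u, w}).ncard + 2 = W.ncard := by
  rw [ncard_sdiff (pair_subset hu hw), ncard_pair huw,
    Nat.sub_add_cancel (two_le_ncard_of_mem hu hw huw)]

lemma vertsOf_eq_empty_iff {G : Set (Sym2 α)} : vertsOf G = ∅ ↔ G = ∅ := by
  refine ⟨fun h => eq_empty_of_forall_notMem fun e he => ?_, fun h => by simp [h, vertsOf]⟩
  induction e with
  | _ a b => exact (eq_empty_iff_forall_notMem.1 h) a ⟨_, he, Sym2.mem_mk_left a b⟩

lemma two_le_ncard_vertsOf [Finite α] {G : Set (Sym2 α)} {e : Sym2 α} (he : e ∈ G)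
    (hd : ¬ e.IsDiag) : 2 ≤ (vertsOf G).ncard := by
  induction e with
  | _ a b =>
    exact (one_lt_ncard_iff).2 ⟨a, b, mem_vertsOf_of_mem he (Sym2.mem_mk_left a b),
      mem_vertsOf_of_mem he (Sym2.mem_mk_right a b), by simpa using hd⟩

lemma exists_eq_mk_of_mem {e : Sym2 α} {u : α} (hd : ¬ e.IsDiag) (hu : u ∈ e) :
    ∃ a, u ≠ a ∧ e = s(u, a) := by
  obtain ⟨a, rfl⟩ := Sym2.mem_iff_exists.1 hu
  exact ⟨a, by simpa using hd, rfl⟩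

lemma edeg_mono [Finite α] {G G' : Set (Sym2 α)} (h : G ⊆ G') (v : α) : edeg G v ≤ edeg G' v :=
  ncard_le_ncard fun _ he => ⟨h he.1, he.2⟩

lemma one_le_edeg [Finite α] {G : Set (Sym2 α)} {v : α} (hv : v ∈ vertsOf G) : 1 ≤ edeg G v := by
  obtain ⟨e, he, hve⟩ := hv
  exact (ncard_pos).2 ⟨e, he, hve⟩

lemma edeg_union_of_disjoint [Finite α] {G G' : Set (Sym2 α)} (h : Disjoint G G') (v : α) :
    edeg (G ∪ G') v = edeg G v + edeg G' v := by
  unfold edeg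
  rw [← ncard_union_eq (h.mono (sep_subset _ _) (sep_subset _ _)), ← sep_union]
  rfl

lemma edeg_insert_of_notMem {G : Set (Sym2 α)} {e : Sym2 α} {v : α} (hv : v ∉ e) :
    edeg (insert e G) v = edeg G v := by
  unfold edeg
  congr 1
  ext f
  simp only [mem_sep_iff, mem_insert_iff]
  constructor
  · rintro ⟨rfl | hf, hvf⟩
    · exact absurd hvf hv
    · exact ⟨hf, hvf⟩
  · exact fun ⟨hf, hvf⟩ => ⟨Or.inr hf, hvf⟩

lemma edeg_insert_of_mem [Finite α] {G : Set (Sym2 α)} {e : Sym2 α} {v : α} (hv : v ∈ e)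
    (he : e ∉ G) : edeg (insert e G) v = edeg G v + 1 := by
  unfold edeg
  have : {f ∈ insert e G | v ∈ f} = insert e {f ∈ G | v ∈ f} := by
    ext f
    simp only [mem_sep_iff, mem_insert_iff]
    constructor
    · rintro ⟨rfl | hf, hvf⟩
      exacts [Or.inl rfl, Or.inr ⟨hf, hvf⟩]
    · rintro (rfl | ⟨hf, hvf⟩)
      exacts [⟨Or.inl rfl, hv⟩, ⟨Or.inr hf, hvf⟩]
  rw [this, ncard_insert_of_notMem fun h => he h.1]

def completeEdges (W : Set α) : Set (Sym2 α) := {e | ¬ e.IsDiag ∧ ∀ v ∈ e, v ∈ W}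

lemma completeEdges_mono {W W' : Set α} (h : W ⊆ W') : completeEdges W ⊆ completeEdges W' :=
  fun _ he => ⟨he.1, fun v hv => h (he.2 v hv)⟩

lemma mk_mem_completeEdges {W : Set α} {u w : α} (hu : u ∈ W) (hw : w ∈ W) (huw : u ≠ w) :
    s(u, w) ∈ completeEdges W :=
  ⟨by simpa using huw, fun v hv => by rcases Sym2.mem_iff.1 hv with rfl | rfl <;> assumption⟩

lemma image_map_setOf_not_isDiag {β : Type*} {f : α → β} (hf : Function.Injective f) :
    Sym2.map f '' {e | ¬ e.IsDiag} = completeEdges (range f) := by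
  ext e
  constructor
  · rintro ⟨e, he, rfl⟩
    refine ⟨by rwa [Sym2.isDiag_map hf], fun v hv => ?_⟩
    obtain ⟨c, -, rfl⟩ := Sym2.mem_map.1 hv
    exact mem_range_self c
  · intro he
    induction e with
    | _ a b =>
      obtain ⟨a', rfl⟩ := he.2 a (Sym2.mem_mk_left a b)
      obtain ⟨b', rfl⟩ := he.2 _ (Sym2.mem_mk_right _ b)
      exact ⟨s(a', b'), by simpa [hf.eq_iff] using he.1, rfl⟩

lemma vertsOf_completeEdges_subset (W : Set α) : vertsOf (completeEdges W) ⊆ W :=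
  fun _ ⟨_, he, hv⟩ => he.2 _ hv

lemma subset_completeEdges_vertsOf {G : Set (Sym2 α)} (hG : ∀ e ∈ G, ¬ e.IsDiag) :
    G ⊆ completeEdges (vertsOf G) :=
  fun e he => ⟨hG e he, fun _ hv => ⟨e, he, hv⟩⟩

lemma eq_of_mem_completeEdges_of_inter_subset {V₁ V₂ : Set α} {u w : α}
    (hcap : V₁ ∩ V₂ ⊆ {u, w}) {e : Sym2 α} (h₁ : e ∈ completeEdges V₁)
    (h₂ : e ∈ completeEdges V₂) : e = s(u, w) := by
  have hends : ∀ v ∈ e, v = u ∨ v = w := fun v hv => hcap ⟨h₁.2 v hv, h₂.2 v hv⟩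
  have hd := h₁.1
  induction e with
  | _ a b =>
    rcases hends a (Sym2.mem_mk_left a b) with rfl | rfl <;>
      rcases hends b (Sym2.mem_mk_right a b) with rfl | rfl <;> simp_all [Sym2.eq_swap]

lemma Relation.ReflTransGen.eq_or_mem_vertsOf {G : Set (Sym2 α)} {v x : α}
    (h : Relation.ReflTransGen (EAdj G) v x) : x = v ∨ x ∈ vertsOf G := by
  induction h with
  | refl => exact Or.inl rfl
  | tail _ hbc _ => exact Or.inr ⟨_, hbc.2, Sym2.mem_mk_right _ _⟩

lemma Relation.ReflTransGen.eAdj_mono {G G' : Set (Sym2 α)} (h : G ⊆ G') {v x : α}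
    (hvx : Relation.ReflTransGen (EAdj G) v x) : Relation.ReflTransGen (EAdj G') v x :=
  Relation.ReflTransGen.mono (fun _ _ hab => ⟨hab.1, h hab.2⟩) _ _ hvx

/-- A walk from `x` stays in `Y` until it first meets a vertex of `X`. -/
lemma EConnected.exists_reflTransGen_mem_inter {X Y : Set (Sym2 α)} (hconn : EConnected (X ∪ Y))
    {x z : α} (hx : x ∈ vertsOf Y) (hz : z ∈ vertsOf X) :
    ∃ y ∈ vertsOf X ∩ vertsOf Y, Relation.ReflTransGen (EAdj Y) x y := by
  have hwalk := hconn x (vertsOf_mono subset_union_right hx) z (vertsOf_mono subset_union_left hz)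
  induction hwalk using Relation.ReflTransGen.head_induction_on with
  | refl => exact ⟨_, ⟨hz, hx⟩, .refl⟩
  | @head a c hac _ ih =>
    by_cases haX : a ∈ vertsOf X
    · exact ⟨a, ⟨haX, hx⟩, .refl⟩
    have hacY : s(a, c) ∈ Y :=
      hac.2.resolve_left fun h => haX (mem_vertsOf_of_mem h (Sym2.mem_mk_left a c))
    obtain ⟨y, hy, hcy⟩ := ih (mem_vertsOf_of_mem hacY (Sym2.mem_mk_right a c))
    exact ⟨y, hy, .head ⟨hac.1, hacY⟩ hcy⟩

end EdgeSets

section ProperlySubcubic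

variable {α : Type*} [Finite α]

/-- The componentwise form of the paper's connected properly subcubic graphs. -/
def ProperlySubcubic (G : Set (Sym2 α)) : Prop :=
  (∀ v, edeg G v ≤ 3) ∧
    ∀ v ∈ vertsOf G, ∃ x, Relation.ReflTransGen (EAdj G) v x ∧ edeg G x ≤ 2

lemma ncard_vertsOf_deleteVertex_lt {G : Set (Sym2 α)} {u : α} (hu : u ∈ vertsOf G) :
    (vertsOf {e ∈ G | u ∉ e}).ncard < (vertsOf G).ncard :=
  ncard_lt_ncard ⟨vertsOf_mono (sep_subset _ _), fun h => by
    obtain ⟨e, he, hue⟩ := h hu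
    exact he.2 hue⟩

/-- A walk to a vertex of degree at most two either avoids `u`, or its last vertex before `u`
lost an edge. -/
lemma ProperlySubcubic.deleteVertex {G : Set (Sym2 α)} (hG : ProperlySubcubic G) (u : α) :
    ProperlySubcubic {e ∈ G | u ∉ e} := by
  set G' := {e ∈ G | u ∉ e}
  refine ⟨fun v => (edeg_mono (sep_subset _ _) v).trans (hG.1 v), fun v hv => ?_⟩
  have hvu : v ≠ u := by
    rintro rfl
    obtain ⟨e, he, hve⟩ := hv
    exact he.2 hve
  obtain ⟨x, hvx, hx⟩ := hG.2 v (vertsOf_mono (sep_subset _ _) hv)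
  suffices (∃ z, Relation.ReflTransGen (EAdj G') v z ∧ edeg G' z ≤ 2) ∨
      (x ≠ u ∧ Relation.ReflTransGen (EAdj G') v x) by
    rcases this with h | ⟨-, hvx'⟩
    exacts [h, ⟨x, hvx', (edeg_mono (sep_subset _ _) x).trans hx⟩]
  clear hx
  induction hvx with
  | refl => exact Or.inr ⟨hvu, .refl⟩
  | @tail b c _ hbc ih =>
    rcases ih with h | ⟨hbu, hvb⟩
    · exact Or.inl h
    by_cases hcu : c = u
    · subst hcu
      refine Or.inl ⟨b, hvb, Nat.le_of_lt_succ (lt_of_lt_of_le ?_ (hG.1 b))⟩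
      exact ncard_lt_ncard ⟨fun e he => ⟨he.1.1, he.2⟩, fun h =>
        (h ⟨hbc.2, Sym2.mem_mk_left b c⟩).1.2 (Sym2.mem_mk_right b c)⟩
    · refine Or.inr ⟨hcu, hvb.tail ⟨hbc.1, hbc.2, fun h => ?_⟩⟩
      rcases Sym2.mem_iff.1 h with h | h
      exacts [hbu h.symm, hcu h.symm]

/-- `a = b` when `u` has degree one. -/
lemma exists_eq_union_pair_of_edeg_le_two {G : Set (Sym2 α)} (hnd : ∀ e ∈ G, ¬ e.IsDiag)
    {u : α} (hu : u ∈ vertsOf G) (h2 : edeg G u ≤ 2) :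
    ∃ a b, u ≠ a ∧ u ≠ b ∧ G = {e ∈ G | u ∉ e} ∪ {s(u, a), s(u, b)} := by
  obtain ⟨e₁, e₂, he⟩ : ∃ e₁ e₂, {e ∈ G | u ∈ e} = {e₁, e₂} := by
    rcases (show edeg G u = 1 ∨ edeg G u = 2 by have := one_le_edeg hu; omega) with h | h
    · obtain ⟨e, he⟩ := ncard_eq_one.1 h
      exact ⟨e, e, by rw [he, pair_eq_singleton]⟩
    · obtain ⟨e₁, e₂, -, he⟩ := ncard_eq_two.1 h
      exact ⟨e₁, e₂, he⟩
  have hmem : ∀ e ∈ ({e₁, e₂} : Set (Sym2 α)), e ∈ G ∧ u ∈ e := fun e h => by rwa [← he] at h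
  obtain ⟨a, hua, ha⟩ := exists_eq_mk_of_mem (hnd _ (hmem e₁ (by simp)).1) (hmem e₁ (by simp)).2
  obtain ⟨b, hub, hb⟩ := exists_eq_mk_of_mem (hnd _ (hmem e₂ (by simp)).1) (hmem e₂ (by simp)).2
  refine ⟨a, b, hua, hub, ?_⟩
  rw [← ha, ← hb, ← he]
  ext e
  by_cases hue : u ∈ e <;> simp [hue]

lemma properlySubcubic_insert_of_separation {X Y : Set (Sym2 α)} {u w : α} (huw : u ≠ w)
    (hconn : EConnected (X ∪ Y)) (h3 : ∀ v, edeg (X ∪ Y) v ≤ 3) (hdisj : Disjoint X Y)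
    (hI : vertsOf X ∩ vertsOf Y = {u, w}) (huwY : s(u, w) ∉ Y) (hu : edeg Y u ≤ 1) :
    ProperlySubcubic (insert s(u, w) Y) := by
  have huwX : u ∈ vertsOf X ∧ w ∈ vertsOf X := by
    have : u ∈ vertsOf X ∩ vertsOf Y ∧ w ∈ vertsOf X ∩ vertsOf Y := by simp [hI]
    exact ⟨this.1.1, this.2.1⟩
  have hu2 : edeg (insert s(u, w) Y) u ≤ 2 := by
    rw [edeg_insert_of_mem (Sym2.mem_mk_left u w) huwY]
    omega
  refine ⟨fun v => ?_, fun v hv => ⟨u, ?_, hu2⟩⟩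
  · by_cases hv : v ∈ s(u, w)
    · have hvX : v ∈ vertsOf X := by
        rcases Sym2.mem_iff.1 hv with rfl | rfl
        exacts [huwX.1, huwX.2]
      rw [edeg_insert_of_mem hv huwY]
      have := edeg_union_of_disjoint hdisj v
      have := one_le_edeg hvX
      have := h3 v
      omega
    · rw [edeg_insert_of_notMem hv]
      exact (edeg_mono subset_union_right v).trans (h3 v)
  · have hwu : Relation.ReflTransGen (EAdj (insert s(u, w) Y)) w u :=
      .single ⟨huw.symm, Or.inl Sym2.eq_swap⟩
    rw [insert_eq, vertsOf_union, vertsOf_singleton_mk] at hv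
    rcases hv with (rfl | rfl) | hv
    · exact .refl
    · exact hwu
    · obtain ⟨z, hz, hvz⟩ := hconn.exists_reflTransGen_mem_inter hv huwX.1
      rw [hI] at hz
      rcases hz with rfl | rfl
      exacts [hvz.eAdj_mono (subset_insert _ _), (hvz.eAdj_mono (subset_insert _ _)).trans hwu]

end ProperlySubcubic

lemma IsCircuitIn.isCircuit {β : Type*} {M : Matroid β} {C : Set β} (hC : IsCircuitIn M C) :
    M.IsCircuit C :=
  Matroid.isCircuit_iff.2 ⟨hC.1, fun D hD hDC =>
    by_contra fun hne => hD.not_indep (hC.2 D (hDC.ssubset_of_ne hne))⟩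

lemma Matroid.Indep.indep_of_subset_closure_of_ncard_le {β : Type*} [Finite β] {M : Matroid β}
    {T D : Set β} (hT : M.Indep T) (hTD : T ⊆ M.closure D) (hD : D ⊆ M.E)
    (hcard : D.ncard ≤ T.ncard) : M.Indep D := by
  obtain ⟨B, hB⟩ := M.exists_isBasis D
  obtain ⟨B', hB', hTB'⟩ := hT.subset_isBasis_of_subset hTD
  have hBB' : B.ncard = B'.ncard := by
    rw [ncard_def, ncard_def, hB.isBasis_closure_right.encard_eq_encard hB']
  have hBD : B = D :=
    eq_of_subset_of_ncard_le hB.subset ((hcard.trans (ncard_le_ncard hTB')).trans hBB'.ge)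
  exact hBD ▸ hB.indep

lemma Matroid.IsBasis.union_subset_closure_union {β : Type*} {M : Matroid β}
    {B₁ B₂ Z₁ Z₂ : Set β} (h₁ : M.IsBasis B₁ Z₁) (h₂ : M.IsBasis B₂ Z₂) :
    Z₁ ∪ Z₂ ⊆ M.closure (B₁ ∪ B₂) :=
  union_subset (h₁.subset_closure.trans (M.closure_subset_closure subset_union_left))
    (h₂.subset_closure.trans (M.closure_subset_closure subset_union_right))

namespace RigFamily

variable (F : RigFamily) {n : ℕ}

lemma not_isDiag_of_mem_ground {e : Sym2 (Fin n)} (he : e ∈ (F.M n).E) : ¬ e.IsDiag := by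
  rwa [F.ground n] at he

lemma completeEdges_subset_ground (W : Set (Fin n)) : completeEdges W ⊆ (F.M n).E := by
  rw [F.ground n]
  exact fun e he => he.1

/-- Heredity identifies the restriction of `F.M n` to a complete graph on `m` vertices with
`F.M m`, whose bases have `2m - 3` elements. -/
lemma ncard_of_isBasis_completeEdges {W : Set (Fin n)} (hW : 2 ≤ W.ncard)
    {B : Set (Sym2 (Fin n))} (hB : (F.M n).IsBasis B (completeEdges W)) :
    B.ncard = 2 * W.ncard - 3 := by
  classical
  set W' := (toFinite W).toFinset
  set f : Fin W'.card ↪o Fin n := W'.orderEmbOfFin rfl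
  have hrange : range f = W := by rw [W'.range_orderEmbOfFin rfl, Finite.coe_toFinset]
  set g : Sym2 (Fin W'.card) → Sym2 (Fin n) := Sym2.map f
  have hg : Function.Injective g := Sym2.map.injective f.injective
  have hcomplete : g '' {e | ¬ e.IsDiag} = completeEdges W :=
    hrange ▸ image_map_setOf_not_isDiag f.injective
  have hindep : ∀ I, (F.M W'.card).Indep I ↔ (F.M n).Indep (g '' I) :=
    F.hered f.toEmbedding
  obtain ⟨B', rfl⟩ : ∃ B', g '' B' = B :=
    ⟨g ⁻¹' B, image_preimage_eq_of_subset (hB.subset.trans (hcomplete ▸ image_subset_range _ _))⟩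
  have hbase : (F.M W'.card).IsBase B' := by
    refine ((hindep B').2 hB.indep).isBase_of_forall_insert fun e he hins => he.2 ?_
    have hge : g e ∈ completeEdges W := hcomplete ▸ mem_image_of_mem g (F.ground _ ▸ he.1)
    rw [hindep, image_insert_eq] at hins
    exact hg.mem_set_image.1 (hB.mem_of_insert_indep hge hins)
  have hcard : W'.card = W.ncard := (ncard_eq_toFinset_card W).symm
  rw [ncard_image_of_injective _ hg, F.rank _ (hcard ▸ hW) B' hbase, hcard]

end RigFamily

namespace ZeroExt

variable {F : RigFamily} (hZ : ZeroExt F) {n : ℕ}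
include hZ

/-- Repeated 0-extensions: attaching the vertices of `T` one by one to `p` and `q`. -/
lemma exists_indep_attach (T : Set (Fin n)) {S : Set (Sym2 (Fin n))} (hS : (F.M n).Indep S)
    {p q : Fin n} (hpq : p ≠ q) (hpT : p ∉ T) (hqT : q ∉ T) (hT : ∀ x ∈ T, x ∉ vertsOf S) :
    ∃ S', (F.M n).Indep S' ∧ S' ⊆ S ∪ completeEdges (insert p (insert q T)) ∧
      S'.ncard = S.ncard + 2 * T.ncard := by
  induction T, toFinite T using Set.Finite.induction_on with
  | empty => exact ⟨S, hS, subset_union_left, by simp⟩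
  | @insert x T hxT hT' ih =>
    obtain ⟨hpx, hpT⟩ := not_or.1 hpT
    obtain ⟨hqx, hqT⟩ := not_or.1 hqT
    obtain ⟨S', hS'i, hS'sub, hS'card⟩ :=
      ih hpT hqT fun y hy => hT y (mem_insert_of_mem x hy)
    have hxS' : x ∉ vertsOf S' := fun hx => by
      rcases vertsOf_union _ _ ▸ vertsOf_mono hS'sub hx with hx | hx
      · exact hT x (mem_insert x T) hx
      · rcases vertsOf_completeEdges_subset _ hx with rfl | rfl | hx
        exacts [hpx rfl, hqx rfl, hxT hx]
    have hW : insert p (insert q T) ⊆ insert p (insert q (insert x T)) :=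
      insert_subset_insert (insert_subset_insert (subset_insert x T))
    refine ⟨S' ∪ {s(x, p), s(x, q)}, hZ n S' x p q hxS' (Ne.symm hpx) (Ne.symm hqx) hS'i,
      union_subset (hS'sub.trans (union_subset_union_right S (completeEdges_mono hW))) ?_, ?_⟩
    · refine insert_subset (Or.inr (mk_mem_completeEdges (by simp) (by simp) (Ne.symm hpx)))
        (singleton_subset_iff.2 (Or.inr (mk_mem_completeEdges (by simp) (by simp) (Ne.symm hqx))))
    · have hdisj : Disjoint S' {s(x, p), s(x, q)} := by
        refine disjoint_left.2 fun e he he' => hxS' ?_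
        rcases he' with rfl | rfl <;> exact mem_vertsOf_of_mem he (Sym2.mem_mk_left _ _)
      rw [ncard_union_eq hdisj, ncard_pair (by simp [hpq, Ne.symm hqx]), hS'card,
        ncard_insert_of_notMem hxT]
      ring

lemma exists_indep_completeEdges {W : Set (Fin n)} {u w : Fin n} (hu : u ∈ W) (hw : w ∈ W)
    (huw : u ≠ w) :
    ∃ S, (F.M n).Indep S ∧ S ⊆ completeEdges W ∧ S.ncard = 2 * W.ncard - 3 := by
  have hedge : (F.M n).Indep {s(u, w)} := by
    simpa using hZ n ∅ u w w (by simp [vertsOf]) huw huw (F.M n).empty_indep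
  obtain ⟨S, hSi, hSsub, hScard⟩ := hZ.exists_indep_attach (W \ {u, w}) hedge huw
    (by simp) (by simp) fun x hx => by simpa [vertsOf_singleton_mk] using hx.2
  rw [insert_insert_sdiff_pair hu hw, union_eq_right.2 (singleton_subset_iff.2
    (mk_mem_completeEdges hu hw huw))] at hSsub
  have hW := ncard_sdiff_pair_add_two hu hw huw
  exact ⟨S, hSi, hSsub, by rw [hScard, ncard_singleton]; omega⟩

/-- One less than the sum of the ranks of the two complete graphs. -/
lemma exists_indep_twoSum {V₁ V₂ : Set (Fin n)} {u w : Fin n} (huw : u ≠ w) (hu₁ : u ∈ V₁)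
    (hw₁ : w ∈ V₁) (hu₂ : u ∈ V₂) (hw₂ : w ∈ V₂) (hcap : V₁ ∩ V₂ ⊆ {u, w}) :
    ∃ T, (F.M n).Indep T ∧ T ⊆ completeEdges V₁ ∪ completeEdges V₂ ∧
      T.ncard = 2 * V₁.ncard + 2 * V₂.ncard - 7 := by
  obtain ⟨S, hSi, hSsub, hScard⟩ := hZ.exists_indep_completeEdges hu₁ hw₁ huw
  obtain ⟨T, hTi, hTsub, hTcard⟩ := hZ.exists_indep_attach (V₂ \ {u, w}) hSi huw (by simp)
    (by simp) fun x hx hxS => hx.2 (hcap ⟨vertsOf_completeEdges_subset _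
      (vertsOf_mono hSsub hxS), hx.1⟩)
  rw [insert_insert_sdiff_pair hu₂ hw₂] at hTsub
  have h₁ := two_le_ncard_of_mem hu₁ hw₁ huw
  have h₂ := ncard_sdiff_pair_add_two hu₂ hw₂ huw
  exact ⟨T, hTi, hTsub.trans (union_subset_union_left _ hSsub), by omega⟩

/-- The sum of the ranks of the two complete graphs. -/
lemma exists_indep_oneSum {V₁ V₂ : Set (Fin n)} {u : Fin n} (hu₁ : u ∈ V₁) (hu₂ : u ∈ V₂)
    (hcap : V₁ ∩ V₂ ⊆ {u}) (h₁ : 2 ≤ V₁.ncard) (h₂ : 2 ≤ V₂.ncard) :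
    ∃ T, (F.M n).Indep T ∧ T ⊆ completeEdges V₁ ∪ completeEdges V₂ ∧
      T.ncard = 2 * V₁.ncard + 2 * V₂.ncard - 6 := by
  obtain ⟨x, hx, hxu⟩ := exists_ne_of_one_lt_ncard h₁ u
  obtain ⟨q, hq, hqu⟩ := exists_ne_of_one_lt_ncard h₂ u
  have hqV₁ : q ∉ V₁ := fun h => hqu (hcap ⟨h, hq⟩)
  obtain ⟨S, hSi, hSsub, hScard⟩ := hZ.exists_indep_completeEdges hu₁ hx (Ne.symm hxu)
  have hqS : q ∉ vertsOf S := fun h => hqV₁ (vertsOf_completeEdges_subset _ (vertsOf_mono hSsub h))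
  have hS'i : (F.M n).Indep (S ∪ {s(q, u)}) := by
    simpa using hZ n S q u u hqS hqu hqu hSi
  obtain ⟨T, hTi, hTsub, hTcard⟩ := hZ.exists_indep_attach (V₂ \ {u, q}) hS'i (Ne.symm hqu)
    (by simp) (by simp) fun y hy hyS => by
      rw [vertsOf_union, vertsOf_singleton_mk] at hyS
      rcases hyS with hyS | hyS
      · exact hy.2 (Or.inl (hcap ⟨vertsOf_completeEdges_subset _ (vertsOf_mono hSsub hyS), hy.1⟩))
      · exact hy.2 (by simpa [or_comm] using hyS)
  rw [insert_insert_sdiff_pair hu₂ hq] at hTsub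
  have hqu' : s(q, u) ∈ completeEdges V₂ := mk_mem_completeEdges hq hu₂ hqu
  have hS'card : (S ∪ {s(q, u)}).ncard = S.ncard + 1 := by
    rw [union_singleton, ncard_insert_of_notMem fun h =>
      hqS (mem_vertsOf_of_mem h (Sym2.mem_mk_left q u))]
  have h₂' := ncard_sdiff_pair_add_two hu₂ hq (Ne.symm hqu)
  refine ⟨T, hTi, hTsub.trans (union_subset (union_subset (hSsub.trans subset_union_left)
    (singleton_subset_iff.2 (Or.inr hqu'))) subset_union_right), by omega⟩

lemma indep_union_of_inter_subset_singleton {V₁ V₂ : Set (Fin n)} {u : Fin n} (hu₁ : u ∈ V₁)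
    (hu₂ : u ∈ V₂) (hcap : V₁ ∩ V₂ ⊆ {u}) (h₁ : 2 ≤ V₁.ncard) (h₂ : 2 ≤ V₂.ncard)
    {X Y : Set (Sym2 (Fin n))} (hX : X ⊆ completeEdges V₁) (hY : Y ⊆ completeEdges V₂)
    (hXi : (F.M n).Indep X) (hYi : (F.M n).Indep Y) : (F.M n).Indep (X ∪ Y) := by
  obtain ⟨T, hTi, hTsub, hTcard⟩ := hZ.exists_indep_oneSum hu₁ hu₂ hcap h₁ h₂
  obtain ⟨BX, hBX, hXBX⟩ := hXi.subset_isBasis_of_subset hX (F.completeEdges_subset_ground V₁)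
  obtain ⟨BY, hBY, hYBY⟩ := hYi.subset_isBasis_of_subset hY (F.completeEdges_subset_ground V₂)
  have hD : (F.M n).Indep (BX ∪ BY) := by
    refine hTi.indep_of_subset_closure_of_ncard_le (hTsub.trans
      (hBX.union_subset_closure_union hBY))
      (union_subset hBX.indep.subset_ground hBY.indep.subset_ground) ?_
    have := ncard_union_le BX BY
    rw [F.ncard_of_isBasis_completeEdges h₁ hBX, F.ncard_of_isBasis_completeEdges h₂ hBY] at this
    omega
  exact hD.subset (union_subset_union hXBX hYBY)

/-- The 2-separation lemma. -/
lemma not_indep_insert_of_isCircuit {V₁ V₂ : Set (Fin n)} {u w : Fin n} (huw : u ≠ w)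
    (hu₁ : u ∈ V₁) (hw₁ : w ∈ V₁) (hu₂ : u ∈ V₂) (hw₂ : w ∈ V₂) (hcap : V₁ ∩ V₂ ⊆ {u, w})
    {X Y : Set (Sym2 (Fin n))} (hX : X ⊆ completeEdges V₁) (hY : Y ⊆ completeEdges V₂)
    (hC : (F.M n).IsCircuit (X ∪ Y)) {y : Sym2 (Fin n)} (hy : y ∈ Y) (hyuw : y ≠ s(u, w)) :
    ¬ (F.M n).Indep (insert s(u, w) Y) := by
  intro hYuw
  have hyV₁ : y ∉ completeEdges V₁ := fun h =>
    hyuw (eq_of_mem_completeEdges_of_inter_subset hcap h (hY hy))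
  have hXi : (F.M n).Indep X :=
    hC.ssubset_indep ⟨subset_union_left, fun h => hyV₁ (hX (h (Or.inr hy)))⟩
  have h₁ := two_le_ncard_of_mem hu₁ hw₁ huw
  have h₂ := two_le_ncard_of_mem hu₂ hw₂ huw
  have huwV₁ : s(u, w) ∈ completeEdges V₁ := mk_mem_completeEdges hu₁ hw₁ huw
  obtain ⟨T, hTi, hTsub, hTcard⟩ := hZ.exists_indep_twoSum huw hu₁ hw₁ hu₂ hw₂ hcap
  obtain ⟨BX, hBX, hXBX⟩ := hXi.subset_isBasis_of_subset hX (F.completeEdges_subset_ground V₁)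
  obtain ⟨BY, hBY, hYBY⟩ := hYuw.subset_isBasis_of_subset
    (insert_subset (mk_mem_completeEdges hu₂ hw₂ huw) hY) (F.completeEdges_subset_ground V₂)
  have hBXcard := F.ncard_of_isBasis_completeEdges h₁ hBX
  have hBYcard := F.ncard_of_isBasis_completeEdges h₂ hBY
  have hDE : BX ∪ BY ⊆ (F.M n).E := union_subset hBX.indep.subset_ground hBY.indep.subset_ground
  have hTD : T ⊆ (F.M n).closure (BX ∪ BY) := hTsub.trans (hBX.union_subset_closure_union hBY)
  have hCD : X ∪ Y ⊆ BX ∪ BY :=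
    union_subset_union hXBX ((subset_insert _ _).trans hYBY)
  by_cases huwBX : s(u, w) ∈ BX
  · -- `uw` is counted twice, so `BX ∪ BY` is small enough to be independent
    refine hC.not_indep ((hTi.indep_of_subset_closure_of_ncard_le hTD hDE ?_).subset hCD)
    have := ncard_union_add_ncard_inter BX BY
    have : 1 ≤ (BX ∩ BY).ncard := (ncard_pos).2 ⟨_, huwBX, hYBY (mem_insert _ _)⟩
    omega
  · -- otherwise drop `y`, which the rest of the circuit spans, and find `BX + uw` inside
    have hyD : y ∈ BX ∪ BY := hCD (Or.inr hy)
    have hDy : (F.M n).Indep ((BX ∪ BY) \ {y}) := by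
      refine hTi.indep_of_subset_closure_of_ncard_le
        (hTD.trans (Matroid.closure_sdiff_singleton_eq_closure ((F.M n).closure_subset_closure
          (sdiff_subset_sdiff_left hCD) (hC.mem_closure_sdiff_singleton_of_mem (Or.inr hy)))).ge)
        (sdiff_subset.trans hDE) ?_
      have hdisj : Disjoint BX BY := disjoint_left.2 fun e he he' => huwBX <|
        eq_of_mem_completeEdges_of_inter_subset hcap (hBX.subset he) (hBY.subset he') ▸ he
      rw [ncard_sdiff_singleton_of_mem hyD, ncard_union_eq hdisj]
      omega
    have hsub : insert s(u, w) BX ⊆ (BX ∪ BY) \ {y} :=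
      insert_subset ⟨Or.inr (hYBY (mem_insert _ _)), Ne.symm hyuw⟩
        (subset_sdiff_singleton subset_union_left fun h => hyV₁ (hBX.subset h))
    have := (hBX.indep.insert_indep_iff_of_notMem huwBX).1 (hDy.subset hsub)
    exact this.2 (hBX.subset_closure huwV₁)

/-- Deleting a vertex of degree at most two leaves a properly subcubic graph, of which `G` is a
0-extension. -/
lemma indep_of_properlySubcubic {G : Set (Sym2 (Fin n))} (hnd : ∀ e ∈ G, ¬ e.IsDiag)
    (hG : ProperlySubcubic G) : (F.M n).Indep G := by
  induction hk : (vertsOf G).ncard using Nat.strong_induction_on generalizing G with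
  | _ k ih =>
    rcases (vertsOf G).eq_empty_or_nonempty with hG₀ | ⟨v, hv⟩
    · exact vertsOf_eq_empty_iff.1 hG₀ ▸ (F.M n).empty_indep
    obtain ⟨u, hvu, hu⟩ := hG.2 v hv
    have huG : u ∈ vertsOf G := hvu.eq_or_mem_vertsOf.elim (· ▸ hv) id
    have hG' : (F.M n).Indep {e ∈ G | u ∉ e} :=
      ih _ (hk ▸ ncard_vertsOf_deleteVertex_lt huG) (fun e he => hnd e he.1)
        (hG.deleteVertex u) rfl
    obtain ⟨a, b, hua, hub, hGeq⟩ := exists_eq_union_pair_of_edeg_le_two hnd huG hu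
    rw [hGeq]
    exact hZ n _ u a b (fun ⟨e, he, hue⟩ => he.2 hue) hua hub hG'

/-- `Y + uw` is properly subcubic, hence independent, against the 2-separation lemma. -/
lemma false_of_two_separation {X Y : Set (Sym2 (Fin n))} {u w : Fin n} (huw : u ≠ w)
    (hC : (F.M n).IsCircuit (X ∪ Y)) (hconn : EConnected (X ∪ Y))
    (h3 : ∀ v, edeg (X ∪ Y) v ≤ 3) (hdisj : Disjoint X Y)
    (hI : vertsOf X ∩ vertsOf Y = {u, w}) (hXY : ¬ vertsOf X ⊆ vertsOf Y)
    (hYX : ¬ vertsOf Y ⊆ vertsOf X) (hu : edeg Y u ≤ 1) : False := by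
  have hnd : ∀ e ∈ X ∪ Y, ¬ e.IsDiag := fun e he => F.not_isDiag_of_mem_ground (hC.subset_ground he)
  have huwI : u ∈ vertsOf X ∩ vertsOf Y ∧ w ∈ vertsOf X ∩ vertsOf Y := by simp [hI]
  obtain ⟨x, ⟨ex, hexX, hxe⟩, hxY⟩ := not_subset.1 hXY
  obtain ⟨y, ⟨ey, heyY, hye⟩, hyX⟩ := not_subset.1 hYX
  have hYi : (F.M n).Indep Y := hC.ssubset_indep
    ⟨subset_union_right, fun h => hxY (mem_vertsOf_of_mem (h (Or.inl hexX)) hxe)⟩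
  have hdep := hZ.not_indep_insert_of_isCircuit huw huwI.1.1 huwI.2.1 huwI.1.2 huwI.2.2 hI.le
    (subset_completeEdges_vertsOf fun e he => hnd e (Or.inl he))
    (subset_completeEdges_vertsOf fun e he => hnd e (Or.inr he)) hC heyY fun h => by
      rcases Sym2.mem_iff.1 (h ▸ hye) with rfl | rfl
      exacts [hyX huwI.1.1, hyX huwI.2.1]
  have huwY : s(u, w) ∉ Y := fun h => hdep (by rwa [insert_eq_of_mem h])
  refine hdep (hZ.indep_of_properlySubcubic ?_
    (properlySubcubic_insert_of_separation huw hconn h3 hdisj hI huwY hu))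
  rintro e (rfl | he)
  exacts [by simpa using huw, hnd e (Or.inr he)]

lemma false_of_separation {X Y : Set (Sym2 (Fin n))} (hC : (F.M n).IsCircuit (X ∪ Y))
    (hconn : EConnected (X ∪ Y)) (hdeg : ∀ v, edeg (X ∪ Y) v = 3) (hdisj : Disjoint X Y)
    (hXY : ¬ vertsOf X ⊆ vertsOf Y) (hYX : ¬ vertsOf Y ⊆ vertsOf X)
    (hsep : (vertsOf X ∩ vertsOf Y).ncard ≤ 2) : False := by
  have hnd : ∀ e ∈ X ∪ Y, ¬ e.IsDiag := fun e he => F.not_isDiag_of_mem_ground (hC.subset_ground he)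
  obtain ⟨x, ⟨ex, hexX, hxe⟩, hxY⟩ := not_subset.1 hXY
  obtain ⟨y, ⟨ey, heyY, hye⟩, hyX⟩ := not_subset.1 hYX
  rcases Nat.lt_or_eq_of_le hsep with h1 | h2
  · have : Nonempty (Fin n) := ⟨x⟩
    obtain ⟨u, hu⟩ := (ncard_le_one_iff_subset_singleton).1 (Nat.le_of_lt_succ h1)
    have hXi : (F.M n).Indep X := hC.ssubset_indep
      ⟨subset_union_left, fun h => hyX (mem_vertsOf_of_mem (h (Or.inr heyY)) hye)⟩
    have hYi : (F.M n).Indep Y := hC.ssubset_indep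
      ⟨subset_union_right, fun h => hxY (mem_vertsOf_of_mem (h (Or.inl hexX)) hxe)⟩
    have hXV : X ⊆ completeEdges (insert u (vertsOf X)) :=
      (subset_completeEdges_vertsOf fun e he => hnd e (Or.inl he)).trans
        (completeEdges_mono (subset_insert _ _))
    have hYV : Y ⊆ completeEdges (insert u (vertsOf Y)) :=
      (subset_completeEdges_vertsOf fun e he => hnd e (Or.inr he)).trans
        (completeEdges_mono (subset_insert _ _))
    have hcap : insert u (vertsOf X) ∩ insert u (vertsOf Y) ⊆ {u} := by
      rw [← insert_inter_distrib]
      exact insert_subset rfl hu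
    exact hC.not_indep (hZ.indep_union_of_inter_subset_singleton (mem_insert u _)
      (mem_insert u _) hcap
      ((two_le_ncard_vertsOf hexX (hnd ex (Or.inl hexX))).trans (ncard_le_ncard_insert _ _))
      ((two_le_ncard_vertsOf heyY (hnd ey (Or.inr heyY))).trans (ncard_le_ncard_insert _ _))
      hXV hYV hXi hYi)
  · obtain ⟨u, w, huw, hI⟩ := ncard_eq_two.1 h2
    have hu : u ∈ vertsOf X ∩ vertsOf Y := hI ▸ mem_insert u _
    have := edeg_union_of_disjoint hdisj u
    have := hdeg u
    have := one_le_edeg hu.1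
    have := one_le_edeg hu.2
    rcases (show edeg Y u ≤ 1 ∨ edeg X u ≤ 1 by omega) with hYu | hXu
    · exact hZ.false_of_two_separation huw hC hconn (fun v => (hdeg v).le) hdisj hI hXY hYX hYu
    · rw [union_comm] at hC hconn hdeg
      exact hZ.false_of_two_separation huw hC hconn (fun v => (hdeg v).le) hdisj.symm
        (inter_comm (vertsOf X) _ ▸ hI) hYX hXY hXu

end ZeroExt

namespace SimpleGraph

variable {V : Type*} (G : SimpleGraph V)

lemma edeg_edgeSet [Fintype V] [DecidableRel G.Adj] (v : V) : edeg G.edgeSet v = G.degree v := by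
  classical
  rw [← card_incidenceSet_eq_degree, ← Nat.card_eq_fintype_card, Nat.card_coe_set_eq]
  rfl

lemma Connected.eConnected {G : SimpleGraph V} (h : G.Connected) : EConnected G.edgeSet :=
  fun u _ w _ => Relation.ReflTransGen.mono (fun _ _ hab => ⟨hab.ne, hab⟩) _ _
    ((reachable_iff_reflTransGen u w).1 (h.preconnected u w))

lemma four_le_card_of_degree_eq_three [Fintype V] [DecidableRel G.Adj] [Nonempty V]
    (hdeg : ∀ v, G.degree v = 3) : 4 ≤ Fintype.card V := by
  classical
  obtain ⟨v⟩ := ‹Nonempty V›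
  calc 4 = (insert v (G.neighborFinset v)).card := by
        rw [Finset.card_insert_of_notMem (notMem_neighborFinset_self G v),
          card_neighborFinset_eq_degree, hdeg v]
    _ ≤ Fintype.card V := Finset.card_le_univ _

lemma exists_not_reachable_induce {s : Set V} (hs : s.Nonempty) (h : ¬ (G.induce s).Connected) :
    ∃ a b : s, ¬ (G.induce s).Reachable a b := by
  have : Nonempty s := hs.to_subtype
  by_contra! hr
  exact h ⟨fun a b => hr a b⟩

/-- `X` is the set of edges meeting one component of `G - s`. -/
lemma exists_separation_of_not_connected_induce_compl (hmin : ∀ v, ∃ w, G.Adj v w) {s : Set V}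
    (hs : sᶜ.Nonempty) (h : ¬ (G.induce sᶜ).Connected) :
    ∃ X Y : Set (Sym2 V), X ∪ Y = G.edgeSet ∧ Disjoint X Y ∧ ¬ vertsOf X ⊆ vertsOf Y ∧
      ¬ vertsOf Y ⊆ vertsOf X ∧ vertsOf X ∩ vertsOf Y ⊆ s := by
  obtain ⟨a, b, hab⟩ := G.exists_not_reachable_induce hs h
  set A := {x | ∃ hx : x ∈ sᶜ, (G.induce sᶜ).Reachable a ⟨x, hx⟩}
  have hA : ∀ x ∈ A, ∀ y, G.Adj x y → y ∈ A ∨ y ∈ s := fun x ⟨hx, hax⟩ y hxy => by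
    by_cases hy : y ∈ s
    exacts [Or.inr hy, Or.inl ⟨hy, hax.trans (Adj.reachable (G := G.induce sᶜ) hxy)⟩]
  set X := {e ∈ G.edgeSet | ∃ v ∈ A, v ∈ e}
  have hXverts : vertsOf X ⊆ A ∪ s := by
    rintro v ⟨e, ⟨he, x, hxA, hxe⟩, hve⟩
    obtain ⟨y, rfl⟩ := Sym2.mem_iff_exists.1 hxe
    rcases Sym2.mem_iff.1 hve with rfl | rfl
    exacts [Or.inl hxA, hA x hxA v he]
  have hYverts : ∀ v ∈ vertsOf (G.edgeSet \ X), v ∉ A :=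
    fun v ⟨e, he, hve⟩ hvA => he.2 ⟨he.1, v, hvA, hve⟩
  have haA : (a : V) ∈ A := ⟨a.2, Reachable.refl _⟩
  have hbA : (b : V) ∉ A := fun ⟨_, hab'⟩ => hab hab'
  obtain ⟨a', ha'⟩ := hmin a
  obtain ⟨b', hb'⟩ := hmin b
  refine ⟨X, G.edgeSet \ X, union_sdiff_cancel (sep_subset _ _), disjoint_sdiff_right,
    fun hXY => hYverts a (hXY ⟨_, ⟨ha', a, haA, Sym2.mem_mk_left _ _⟩, Sym2.mem_mk_left _ _⟩) haA,
    fun hYX => ?_, fun v hv => (hXverts hv.1).resolve_left (hYverts v hv.2)⟩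
  have hb'X : s(↑b, b') ∉ X := by
    rintro ⟨-, v, hvA, hv⟩
    rcases Sym2.mem_iff.1 hv with rfl | rfl
    · exact hbA hvA
    · exact (hA v hvA b hb'.symm).elim hbA b.2
  rcases hXverts (hYX ⟨_, ⟨hb', hb'X⟩, Sym2.mem_mk_left _ _⟩) with h | h
  exacts [hbA h, b.2 h]

lemma exists_card_eq_two_not_connected_induce [Fintype V] [DecidableEq V]
    (hV : 4 ≤ Fintype.card V) {s : Set V} (hs : s.ncard ≤ 2) (hsc : sᶜ.Nonempty)
    (h : ¬ (G.induce sᶜ).Connected) :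
    ∃ t : Finset V, t.card = 2 ∧ ¬ (G.induce (↑tᶜ : Set V)).Connected := by
  obtain ⟨a, b, hab⟩ := G.exists_not_reachable_induce hsc h
  have hne : (a : V) ≠ b := fun h => hab (by rw [Subtype.ext h])
  have hsub : (toFinite s).toFinset ⊆ Finset.univ \ {(a : V), (b : V)} := fun x hx => by
    have := a.2
    have := b.2
    simp only [Finite.mem_toFinset] at hx
    simp only [Finset.mem_sdiff, Finset.mem_univ, Finset.mem_insert, Finset.mem_singleton, true_and]
    rintro (rfl | rfl) <;> contradiction
  obtain ⟨t, hst, htab, ht⟩ := Finset.exists_subsuperset_card_eq (n := 2) hsub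
    (by rwa [← ncard_eq_toFinset_card]) (by
      rw [Finset.card_sdiff_of_subset (Finset.subset_univ _), Finset.card_pair hne,
        Finset.card_univ]
      omega)
  refine ⟨t, ht, fun hconn => ?_⟩
  have hts : (↑tᶜ : Set V) ⊆ sᶜ := fun x hx hxs => by
    simp only [Finset.coe_compl, mem_compl_iff, Finset.mem_coe] at hx
    exact hx (hst (by simpa using hxs))
  have hnot : ∀ x ∈ ({(a : V), (b : V)} : Finset V), x ∈ (↑tᶜ : Set V) := fun x hx => by
    simp only [Finset.coe_compl, mem_compl_iff, Finset.mem_coe]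
    exact fun hxt => (Finset.mem_sdiff.1 (htab hxt)).2 hx
  exact hab ((hconn.preconnected ⟨a, hnot a (by simp)⟩ ⟨b, hnot b (by simp)⟩).map
    (G.induceHomOfLE hts).toHom)

end SimpleGraph

/-- (1) Every connected cubic graph other than `K₄` and `K_{3,3}` is either
3-connected or has a 2-vertex separator. (2) Every connected cubic graph
that is a circuit of some matroidal 2-rigidity family (with the 0-extension
property) and is neither `K₄` nor `K_{3,3}` is 3-connected. -/
theorem stmt17 :
    (∀ {V : Type} [Fintype V] [DecidableEq V] (G : SimpleGraph V)
        [DecidableRel G.Adj],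
      G.Connected → (∀ v : V, G.degree v = 3) →
      ¬ Nonempty (G ≃g (⊤ : SimpleGraph (Fin 4))) →
      ¬ Nonempty (G ≃g completeBipartiteGraph (Fin 3) (Fin 3)) →
      ((4 ≤ Fintype.card V ∧
          ∀ s : Set V, s.ncard ≤ 2 → (G.induce sᶜ).Connected) ∨
        ∃ s : Finset V, s.card = 2 ∧
          ¬ (G.induce (↑sᶜ : Set V)).Connected)) ∧
    (∀ (F : RigFamily), ZeroExt F →
      ∀ (n : ℕ) (H : SimpleGraph (Fin n)) [DecidableRel H.Adj],
      H.Connected → (∀ v : Fin n, H.degree v = 3) →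
      IsCircuitIn (F.M n) H.edgeSet →
      ¬ Nonempty (H ≃g (⊤ : SimpleGraph (Fin 4))) →
      ¬ Nonempty (H ≃g completeBipartiteGraph (Fin 3) (Fin 3)) →
      (4 ≤ n ∧ ∀ s : Set (Fin n), s.ncard ≤ 2 → (H.induce sᶜ).Connected)) := by
  constructor
  · intro V _ _ G _ hconn hdeg _ _
    have : Nonempty V := hconn.nonempty
    have hV := G.four_le_card_of_degree_eq_three hdeg
    by_cases hall : ∀ s : Set V, s.ncard ≤ 2 → (G.induce sᶜ).Connected
    · exact Or.inl ⟨hV, hall⟩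
    · push Not at hall
      obtain ⟨s, hs, hdisc⟩ := hall
      exact Or.inr (G.exists_card_eq_two_not_connected_induce hV hs
        (compl_nonempty_of_ncard_lt_card (by omega)) hdisc)
  · intro F hZ n H _ hconn hdeg hcirc _ _
    have : Nonempty (Fin n) := hconn.nonempty
    have hn : 4 ≤ n := by simpa using H.four_le_card_of_degree_eq_three hdeg
    refine ⟨hn, fun s hs => by_contra fun hdisc => ?_⟩
    have hmin : ∀ v, ∃ w, H.Adj v w := fun v =>
      (H.degree_pos_iff_exists_adj v).1 (by rw [hdeg v]; norm_num)
    obtain ⟨X, Y, hXY, hdisj, hX, hY, hI⟩ :=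
      H.exists_separation_of_not_connected_induce_compl hmin
        (compl_nonempty_of_ncard_lt_card (by simp only [Fintype.card_fin]; omega)) hdisc
    exact hZ.false_of_separation (hXY ▸ hcirc.isCircuit) (hXY ▸ hconn.eConnected)
      (fun v => hXY ▸ (H.edeg_edgeSet v).trans (hdeg v)) hdisj hX hY
      ((ncard_le_ncard hI).trans hs)
end

section
/- Let G be a graph that is not 3-connected but is 2-connected and cubic, with a separating pair {u, w}. Let J be a connected component of G - u - w and X the subgraph induced on V(J) ∪ {u,w}, Y the remaining edges. Then X + {u,w} (adding the edge {u,w} if missing) is a connected graph with maximum degree at most 3 containing a vertex of degree at most 2 (i.e., properly subcubic and connected). -/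
/-!
Pick two components `C₁`, `C₂` of `G - u - w`. Since `G - w` is connected, a walk in it from a
component to `u` leaves the component through a neighbour of `u`; so every component contains a
neighbour of `u`, and likewise of `w`. As `u` and `w` have three neighbours each, one of the two
components, say `C₁`, contains exactly one neighbour of `u` and at most two of `w`. Then
`X = G[C₁ ∪ {u, w}] + uw` is connected through that neighbour of `u`, the vertices of `C₁` keep
degree at most 3, `w` gets degree at most 3 and `u` degree at most 2.
-/

open Relation

section EdgeSets

variable {α : Type*} {E : Set (Sym2 α)}

instance (E : Set (Sym2 α)) : Std.Symm (EAdj E) :=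
  ⟨fun _ _ h => ⟨h.1.symm, Sym2.eq_swap ▸ h.2⟩⟩

lemma EConnected.of_forall_reflTransGen (c : α)
    (h : ∀ v ∈ vertsOf E, ReflTransGen (EAdj E) v c) : EConnected E :=
  fun x hx y hy => (h x hx).trans (Std.Symm.symm _ _ (h y hy))

lemma edeg_le_ncard {v : α} {A : Set α} (hA : A.Finite) (h : ∀ y, s(v, y) ∈ E → y ∈ A) :
    edeg E v ≤ A.ncard :=
  calc edeg E v ≤ ((fun y => s(v, y)) '' A).ncard := by
        refine Set.ncard_le_ncard ?_ (hA.image _)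
        rintro e ⟨he, hve⟩
        obtain ⟨y, rfl⟩ := Sym2.mem_iff_exists.mp hve
        exact ⟨y, h y he, rfl⟩
    _ ≤ A.ncard := Set.ncard_image_le hA

end EdgeSets

namespace SimpleGraph

variable {V : Type*} (G : SimpleGraph V)

/-- By `SimpleGraph.maximal_connected_induce_iff`, these are the vertex sets of the connected
components of `G.induce P`, seen as subsets of `V`. -/
def IsComponentIn (P S : Set V) : Prop :=
  Maximal (fun T : Set V => T ⊆ P ∧ (G.induce T).Connected) S

def edgesWithin (T : Set V) : Set (Sym2 V) := {e ∈ G.edgeSet | ∀ x ∈ e, x ∈ T}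

variable {G} {P S T : Set V} {u w : V}

lemma exists_isComponentIn [Finite V] {z : V} (hz : z ∈ P) :
    ∃ S, G.IsComponentIn P S ∧ z ∈ S := by
  obtain ⟨S, hzS, hS⟩ := Finite.exists_le_maximal
    (p := fun T : Set V => T ⊆ P ∧ (G.induce T).Connected) (a := {z})
    ⟨Set.singleton_subset_iff.mpr hz, by rw [induce_singleton_eq_top]; exact connected_top⟩
  exact ⟨S, hS, hzS rfl⟩

namespace IsComponentIn

lemma subset (hS : G.IsComponentIn P S) : S ⊆ P := hS.1.1

lemma connected (hS : G.IsComponentIn P S) : (G.induce S).Connected := hS.1.2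

lemma nonempty (hS : G.IsComponentIn P S) : S.Nonempty :=
  Set.nonempty_coe_sort.mp hS.connected.nonempty

lemma mem_of_adj (hS : G.IsComponentIn P S) {a b : V} (ha : a ∈ S) (hb : b ∈ P)
    (hab : G.Adj a b) : b ∈ S := by
  have hconn : (G.induce (S ∪ {a, b})).Connected :=
    induce_union_connected hS.connected.preconnected
      (induce_pair_connected_of_adj hab).preconnected ⟨a, ha, Set.mem_insert a _⟩
  have hsub : S ∪ {a, b} ⊆ P := Set.union_subset hS.subset
    (Set.insert_subset (hS.subset ha) (Set.singleton_subset_iff.mpr hb))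
  exact hS.2 ⟨hsub, hconn⟩ Set.subset_union_left (Or.inr (Set.mem_insert_of_mem a rfl))

lemma reachable (hS : G.IsComponentIn P S) {x y : P} (hx : ↑x ∈ S) (hy : ↑y ∈ S) :
    (G.induce P).Reachable x y :=
  (hS.connected.preconnected ⟨x, hx⟩ ⟨y, hy⟩).map (induceHomOfLE G hS.subset).toHom

lemma disjoint_of_not_reachable (hS : G.IsComponentIn P S) (hT : G.IsComponentIn P T)
    {x y : P} (hx : ↑x ∈ S) (hy : ↑y ∈ T) (hxy : ¬ (G.induce P).Reachable x y) :
    Disjoint S T := by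
  refine Set.disjoint_left.mpr fun z hzS hzT => hxy (hS.reachable hx ?_)
  have hconn : (G.induce (S ∪ T)).Connected :=
    induce_union_connected hS.connected.preconnected hT.connected.preconnected ⟨z, hzS, hzT⟩
  exact hS.2 ⟨Set.union_subset hS.subset hT.subset, hconn⟩ Set.subset_union_left (Or.inr hy)

/-- A walk in `G[Q]` from `S` to a vertex outside `S` leaves `S` along an edge, which cannot
end in `P`. -/
lemma exists_adj_of_connected_induce (hS : G.IsComponentIn P S) {Q : Set V} (hPQ : P ⊆ Q)
    (hQ : (G.induce Q).Connected) {y : V} (hyQ : y ∈ Q) (hyS : y ∉ S) :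
    ∃ a ∈ S, ∃ b ∈ Q \ P, G.Adj a b := by
  obtain ⟨z, hz⟩ := hS.nonempty
  obtain ⟨p⟩ := hQ.preconnected ⟨z, hPQ (hS.subset hz)⟩ ⟨y, hyQ⟩
  obtain ⟨d, -, hd₁, hd₂⟩ := p.exists_boundary_dart (Subtype.val ⁻¹' S) hz hyS
  exact ⟨d.fst, hd₁, d.snd, ⟨d.snd.2, fun hP => hd₂ (hS.mem_of_adj hd₁ hP d.adj)⟩, d.adj⟩

lemma neighborSet_inter_nonempty (hS : G.IsComponentIn {v | v ≠ u ∧ v ≠ w} S)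
    (hGw : (G.induce {v | v ≠ w}).Connected) (huw : u ≠ w) :
    (G.neighborSet u ∩ S).Nonempty := by
  obtain ⟨a, ha, b, ⟨hbw, hbP⟩, hab⟩ :=
    hS.exists_adj_of_connected_induce (fun v hv => hv.2) hGw (y := u) huw
      (fun hu => (hS.subset hu).1 rfl)
  obtain rfl : b = u := by by_contra hbu; exact hbP ⟨hbu, hbw⟩
  exact ⟨a, hab.symm, ha⟩

end IsComponentIn

lemma ncard_neighborSet_inter_add_le_degree (v : V) [Fintype (G.neighborSet v)]
    (hST : Disjoint S T) :
    (G.neighborSet v ∩ S).ncard + (G.neighborSet v ∩ T).ncard ≤ G.degree v := by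
  rw [← Set.ncard_union_eq (hST.mono Set.inter_subset_right Set.inter_subset_right)
    (Set.toFinite _) (Set.toFinite _), ← Set.inter_union_distrib_left]
  calc _ ≤ (G.neighborSet v).ncard := Set.ncard_le_ncard Set.inter_subset_left (Set.toFinite _)
    _ = G.degree v := by
      rw [Set.ncard_eq_toFinset_card', Set.toFinset_card, card_neighborSet_eq_degree]

lemma exists_isComponentIn_ncard_neighborSet [Fintype V] [DecidableRel G.Adj] (huw : u ≠ w)
    (hu : G.degree u ≤ 3) (hw : G.degree w ≤ 3)
    (hGu : (G.induce {v | v ≠ u}).Connected) (hGw : (G.induce {v | v ≠ w}).Connected)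
    {x y : {v | v ≠ u ∧ v ≠ w}} (hxy : ¬ (G.induce {v | v ≠ u ∧ v ≠ w}).Reachable x y) :
    ∃ S, G.IsComponentIn {v | v ≠ u ∧ v ≠ w} S ∧ (G.neighborSet u ∩ S).ncard = 1 ∧
      (G.neighborSet w ∩ S).ncard ≤ 2 := by
  have hP : {v : V | v ≠ w ∧ v ≠ u} = {v | v ≠ u ∧ v ≠ w} := Set.ext fun _ => and_comm
  have hposu {S} (hS : G.IsComponentIn {v | v ≠ u ∧ v ≠ w} S) :
      0 < (G.neighborSet u ∩ S).ncard :=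
    (Set.ncard_pos (Set.toFinite _)).mpr (hS.neighborSet_inter_nonempty hGw huw)
  have hposw {S} (hS : G.IsComponentIn {v | v ≠ u ∧ v ≠ w} S) :
      0 < (G.neighborSet w ∩ S).ncard :=
    (Set.ncard_pos (Set.toFinite _)).mpr ((hP ▸ hS).neighborSet_inter_nonempty hGu huw.symm)
  obtain ⟨S₁, hS₁, hx⟩ := exists_isComponentIn (G := G) x.2
  obtain ⟨S₂, hS₂, hy⟩ := exists_isComponentIn (G := G) y.2
  have hdisj := hS₁.disjoint_of_not_reachable hS₂ hx hy hxy
  have := G.ncard_neighborSet_inter_add_le_degree u hdisj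
  have := G.ncard_neighborSet_inter_add_le_degree w hdisj
  have := hposu hS₁; have := hposu hS₂; have := hposw hS₁; have := hposw hS₂
  by_cases h : (G.neighborSet u ∩ S₁).ncard ≤ 1
  · exact ⟨S₁, hS₁, by omega, by omega⟩
  · exact ⟨S₂, hS₂, by omega, by omega⟩

variable (G)

lemma mk_mem_edgesWithin {a b : V} :
    s(a, b) ∈ G.edgesWithin T ↔ G.Adj a b ∧ a ∈ T ∧ b ∈ T := by
  simp [edgesWithin]

lemma edgesWithin_mono (hST : S ⊆ T) : G.edgesWithin S ⊆ G.edgesWithin T :=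
  fun _ he => ⟨he.1, fun x hx => hST (he.2 x hx)⟩

lemma vertsOf_edgesWithin_union_subset (hu : u ∈ T) (hw : w ∈ T) :
    vertsOf (G.edgesWithin T ∪ {s(u, w)}) ⊆ T := by
  rintro v ⟨e, he | rfl, hve⟩
  · exact he.2 v hve
  · rcases Sym2.mem_iff.mp hve with rfl | rfl <;> assumption

lemma reflTransGen_eAdj_of_reachable {E : Set (Sym2 V)} (hE : G.edgesWithin T ⊆ E) {x y : T}
    (h : (G.induce T).Reachable x y) : ReflTransGen (EAdj E) x y := by
  rw [reachable_iff_reflTransGen] at h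
  exact h.lift Subtype.val fun a b hab =>
    ⟨G.ne_of_adj hab, hE ((G.mk_mem_edgesWithin).mpr ⟨hab, a.2, b.2⟩)⟩

lemma econnected_edgesWithin_union (huw : u ≠ w) (hS : (G.induce S).Connected) {s : V}
    (hs : s ∈ S) (hsu : G.Adj s u) : EConnected (G.edgesWithin (S ∪ {u, w}) ∪ {s(u, w)}) := by
  have hST : S ⊆ S ∪ {u, w} := Set.subset_union_left
  refine EConnected.of_forall_reflTransGen u fun v hv => ?_
  rcases G.vertsOf_edgesWithin_union_subset (by simp) (by simp) hv with hvS | rfl | rfl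
  · have hvs : ReflTransGen (EAdj (G.edgesWithin (S ∪ {u, w}) ∪ {s(u, w)})) v s :=
      G.reflTransGen_eAdj_of_reachable ((G.edgesWithin_mono hST).trans Set.subset_union_left)
        (hS.preconnected ⟨v, hvS⟩ ⟨s, hs⟩)
    exact hvs.tail
      ⟨G.ne_of_adj hsu, Or.inl ((G.mk_mem_edgesWithin).mpr ⟨hsu, hST hs, by simp⟩)⟩
  · exact ReflTransGen.refl
  · exact ReflTransGen.single ⟨huw.symm, Or.inr Sym2.eq_swap⟩

lemma edeg_edgesWithin_union_le_degree {v : V} [Fintype (G.neighborSet v)] (hvu : v ≠ u)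
    (hvw : v ≠ w) : edeg (G.edgesWithin T ∪ {s(u, w)}) v ≤ G.degree v := by
  refine (edeg_le_ncard (A := G.neighborSet v) (Set.toFinite _) fun y hy => ?_).trans_eq
    (by rw [Set.ncard_eq_toFinset_card', Set.toFinset_card, card_neighborSet_eq_degree])
  rcases hy with hy | hy
  · exact ((G.mk_mem_edgesWithin).mp hy).1
  · rcases Sym2.eq_iff.mp hy with ⟨rfl, -⟩ | ⟨rfl, -⟩ <;> contradiction

lemma edeg_edgesWithin_union_le_left [Finite V] :
    edeg (G.edgesWithin (S ∪ {u, w}) ∪ {s(u, w)}) u ≤ (G.neighborSet u ∩ S).ncard + 1 := by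
  refine (edeg_le_ncard (A := insert w (G.neighborSet u ∩ S)) (Set.toFinite _)
    fun y hy => ?_).trans (Set.ncard_insert_le _ _)
  rcases hy with hy | hy
  · obtain ⟨huy, -, hyS | rfl | rfl⟩ := (G.mk_mem_edgesWithin).mp hy
    · exact Or.inr ⟨huy, hyS⟩
    · exact absurd rfl huy.ne
    · exact Or.inl rfl
  · exact Or.inl (Sym2.congr_right.mp hy)

lemma edeg_edgesWithin_union_le_right [Finite V] :
    edeg (G.edgesWithin (S ∪ {u, w}) ∪ {s(u, w)}) w ≤ (G.neighborSet w ∩ S).ncard + 1 := by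
  rw [Set.pair_comm, Sym2.eq_swap]
  exact G.edeg_edgesWithin_union_le_left

lemma edeg_edgesWithin_union_le_three [Fintype V] [DecidableRel G.Adj]
    (hdeg : ∀ x ∈ S, G.degree x ≤ 3) (hSuw : ∀ x ∈ S, x ≠ u ∧ x ≠ w)
    (hu : (G.neighborSet u ∩ S).ncard ≤ 2) (hw : (G.neighborSet w ∩ S).ncard ≤ 2) :
    ∀ x ∈ vertsOf (G.edgesWithin (S ∪ {u, w}) ∪ {s(u, w)}),
      edeg (G.edgesWithin (S ∪ {u, w}) ∪ {s(u, w)}) x ≤ 3 := by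
  intro x hx
  rcases G.vertsOf_edgesWithin_union_subset (by simp) (by simp) hx with hxS | rfl | rfl
  · exact (G.edeg_edgesWithin_union_le_degree (hSuw x hxS).1 (hSuw x hxS).2).trans (hdeg x hxS)
  · exact G.edeg_edgesWithin_union_le_left.trans (by omega)
  · exact G.edeg_edgesWithin_union_le_right.trans (by omega)

end SimpleGraph

theorem stmt18_general {V : Type*} [Fintype V] (G : SimpleGraph V)
    [DecidableRel G.Adj]
    (hcubic : ∀ v : V, G.degree v = 3)
    (h2conn : 3 ≤ Fintype.card V ∧
      ∀ x : V, (G.induce {v : V | v ≠ x}).Connected)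
    (u w : V) (huw : u ≠ w)
    (hsep : ¬ (G.induce {v : V | v ≠ u ∧ v ≠ w}).Connected) :
    ∃ S : Set V, S.Nonempty ∧ (∀ x ∈ S, x ≠ u ∧ x ≠ w) ∧
      (∀ a ∈ S, ∀ b : V, G.Adj a b → b ∈ S ∪ {u, w}) ∧
      (G.induce S).Connected ∧
      ∀ X : Set (Sym2 V),
        X = {e ∈ G.edgeSet | ∀ x ∈ e, x ∈ S ∪ {u, w}} ∪ {s(u, w)} →
        EConnected X ∧ (∀ x ∈ vertsOf X, edeg X x ≤ 3) ∧
          ∃ x ∈ vertsOf X, edeg X x ≤ 2 := by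
  classical
  set P : Set V := {v | v ≠ u ∧ v ≠ w}
  have : Nonempty P := by
    obtain ⟨z, -, hz⟩ := Finset.exists_mem_notMem_of_card_lt_card (s := {u, w})
      (t := Finset.univ) (by rw [Finset.card_univ]; exact Finset.card_le_two.trans_lt h2conn.1)
    exact ⟨z, show z ≠ u ∧ z ≠ w by simpa [not_or] using hz⟩
  obtain ⟨x, y, hxy⟩ : ∃ x y : P, ¬ (G.induce P).Reachable x y := by
    simpa [SimpleGraph.connected_iff, SimpleGraph.Preconnected] using hsep
  obtain ⟨S, hS, hSu, hSw⟩ := SimpleGraph.exists_isComponentIn_ncard_neighborSet huw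
    (hcubic u).le (hcubic w).le (h2conn.2 u) (h2conn.2 w) hxy
  obtain ⟨s, hsu, hs⟩ := Set.nonempty_of_ncard_ne_zero (s := G.neighborSet u ∩ S) (by omega)
  refine ⟨S, hS.nonempty, hS.subset, fun a ha b hab => ?_, hS.connected, ?_⟩
  · by_cases hb : b ∈ P
    · exact Or.inl (hS.mem_of_adj ha hb hab)
    · right
      simpa [P, or_iff_not_and_not] using hb
  · rintro X rfl
    refine ⟨G.econnected_edgesWithin_union huw hS.connected hs hsu.symm,
      G.edeg_edgesWithin_union_le_three (fun x _ => (hcubic x).le) hS.subset (by omega) hSw,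
      u, ⟨s(u, w), Or.inr rfl, Sym2.mem_mk_left u w⟩, ?_⟩
    exact G.edeg_edgesWithin_union_le_left.trans (by omega)

/-- Let `G` be a 2-connected cubic graph with a separating pair `{u, w}`.
Then some connected component `S` of `G - u - w` is such that the graph `X`
consisting of the edges of `G` inside `S ∪ {u, w}` together with the edge
`{u, w}` is connected, has maximum degree at most 3, and has a vertex of
degree at most 2 (i.e. it is connected and properly subcubic). -/
theorem stmt18 {V : Type*} [Fintype V] [DecidableEq V] (G : SimpleGraph V)
    [DecidableRel G.Adj]
    (hcubic : ∀ v : V, G.degree v = 3)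
    (h2conn : 3 ≤ Fintype.card V ∧
      ∀ x : V, (G.induce {v : V | v ≠ x}).Connected)
    (u w : V) (huw : u ≠ w)
    (hsep : ¬ (G.induce {v : V | v ≠ u ∧ v ≠ w}).Connected) :
    ∃ S : Set V, S.Nonempty ∧ (∀ x ∈ S, x ≠ u ∧ x ≠ w) ∧
      (∀ a ∈ S, ∀ b : V, G.Adj a b → b ∈ S ∪ {u, w}) ∧
      (G.induce S).Connected ∧
      ∀ X : Set (Sym2 V),
        X = {e ∈ G.edgeSet | ∀ x ∈ e, x ∈ S ∪ {u, w}} ∪ {s(u, w)} →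
        EConnected X ∧ (∀ x ∈ vertsOf X, edeg X x ≤ 3) ∧
          ∃ x ∈ vertsOf X, edeg X x ≤ 2 :=
  stmt18_general G hcubic h2conn u w huw hsep
end
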